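/- Let G be a finite directed acyclic graph in which every ST-path consists of a single edge from a source to a target (a 'direct' network). Then for every vertex set R ⊆ V, the number of vertices of V_ST with φ_R(v) = 0 is at most 2·(P − |P_R|), twice the number of ST-paths not covered by R. -/

import Mathlib

/-!
Common setup: a finite directed acyclic graph is a finite vertex type `V`
with an edge relation `E : V → V → Prop` such that no vertex can reach
itself by a nonempty directed walk (`DAG`).
A directed path/walk is a nonempty list of vertices in which consecutive
vertices are joined by edges (a single-vertex path is allowed).
-/

variable {V : Type*}

/-- Acyclicity: no vertex reaches itself by a nonempty directed walk. -/
def DAG (E : V → V → Prop) : Prop := ∀ v : V, ¬ Relation.TransGen E v v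

/-- A source: a vertex with no incoming edges. -/
def IsSource (E : V → V → Prop) (v : V) : Prop := ∀ u, ¬ E u v

/-- A target: a vertex with no outgoing edges. -/
def IsTarget (E : V → V → Prop) (v : V) : Prop := ∀ u, ¬ E v u

/-- A directed walk/path: a nonempty list of vertices joined by consecutive edges. -/
def IsWalk (E : V → V → Prop) (p : List V) : Prop := p ≠ [] ∧ p.Chain' E

/-- A directed path from `a` to `b`. -/
def PathFrom (E : V → V → Prop) (a b : V) (p : List V) : Prop :=
  IsWalk E p ∧ p.head? = some a ∧ p.getLast? = some b

/-- An ST-path: a directed path from some source to some target. -/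
def IsSTPath (E : V → V → Prop) (p : List V) : Prop :=
  ∃ s t, IsSource E s ∧ IsTarget E t ∧ PathFrom E s t p

/-- The set of all ST-paths. -/
def STPaths (E : V → V → Prop) : Set (List V) := {p | IsSTPath E p}

/-- Path centrality `P(v)`: the number of ST-paths traversing `v`. -/
noncomputable def pathCentrality (E : V → V → Prop) (v : V) : ℕ :=
  {p : List V | IsSTPath E p ∧ v ∈ p}.ncard

/-- `P_S(v)`: the number of directed paths from some source to `v`. -/
noncomputable def PS (E : V → V → Prop) (v : V) : ℕ :=
  {p : List V | ∃ s, IsSource E s ∧ PathFrom E s v p}.ncard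

/-- `P_T(v)`: the number of directed paths from `v` to some target. -/
noncomputable def PT (E : V → V → Prop) (v : V) : ℕ :=
  {p : List V | ∃ t, IsTarget E t ∧ PathFrom E v t p}.ncard

/-- `P_R`: the set of ST-paths traversing at least one vertex of `R`. -/
def coveredPaths (E : V → V → Prop) (R : Set V) : Set (List V) :=
  {p | IsSTPath E p ∧ ∃ v ∈ R, v ∈ p}

/-! In a direct network every ST-path is a single edge `[s, t]`. A vertex `v` with `φ_R(v) = 0`
lies on such an edge, and that edge avoids `R`, since otherwise the edge itself would join `v`
to a vertex of `R`. So these vertices are among the vertices of the uncovered ST-paths, and each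
ST-path has two vertices. -/

theorem Set.Finite.ncard_biUnion_mem_le {α : Type*} {U : Set (List α)} (hU : U.Finite) {k : ℕ}
    (hk : ∀ p ∈ U, p.length ≤ k) : (⋃ p ∈ U, {x | x ∈ p}).ncard ≤ k * U.ncard := by
  classical
  calc (⋃ p ∈ U, {x | x ∈ p}).ncard = (⋃ p ∈ hU.toFinset, {x | x ∈ p}).ncard := by simp
    _ ≤ ∑ p ∈ hU.toFinset, {x | x ∈ p}.ncard := Finset.set_ncard_biUnion_le _ _
    _ ≤ ∑ _p ∈ hU.toFinset, k := Finset.sum_le_sum fun p hp => by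
      rw [← List.coe_toFinset, Set.ncard_coe_finset]
      exact p.toFinset_card_le.trans (hk p (hU.mem_toFinset.mp hp))
    _ = k * U.ncard := by
      rw [Finset.sum_const, smul_eq_mul, mul_comm, Set.ncard_eq_toFinset_card U hU]

def IsDirect (E : V → V → Prop) : Prop :=
  ∀ p : List V, IsSTPath E p → ∃ s t, E s t ∧ p = [s, t]

section DirectNetwork

variable {E : V → V → Prop}

theorem pathFrom_singleton (u : V) : PathFrom E u u [u] :=
  ⟨⟨List.cons_ne_nil u [], List.isChain_singleton u⟩, rfl, rfl⟩

theorem pathFrom_pair {s t : V} (h : E s t) : PathFrom E s t [s, t] :=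
  ⟨⟨List.cons_ne_nil s [t], List.isChain_pair.mpr h⟩, rfl, rfl⟩

theorem exists_pathFrom_of_mem_pair {s t v w : V} (h : E s t) (hv : v ∈ [s, t])
    (hw : w ∈ [s, t]) : (∃ q, PathFrom E v w q) ∨ (∃ q, PathFrom E w v q) := by
  simp only [List.mem_cons, List.not_mem_nil, or_false] at hv hw
  rcases hv with rfl | rfl <;> rcases hw with rfl | rfl
  · exact .inl ⟨_, pathFrom_singleton _⟩
  · exact .inl ⟨_, pathFrom_pair h⟩
  · exact .inr ⟨_, pathFrom_pair h⟩
  · exact .inl ⟨_, pathFrom_singleton _⟩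

namespace IsDirect

theorem length_eq_two (hD : IsDirect E) {p : List V} (hp : p ∈ STPaths E) : p.length = 2 := by
  obtain ⟨s, t, -, rfl⟩ := hD p hp
  rfl

theorem finite_stPaths [Finite V] (hD : IsDirect E) : (STPaths E).Finite :=
  (Set.finite_univ.image fun st : V × V => [st.1, st.2]).subset fun p hp =>
    let ⟨s, t, _, hp⟩ := hD p hp
    ⟨(s, t), trivial, hp.symm⟩

theorem notMem_coveredPaths (hD : IsDirect E) {R : Set V} {p : List V} {v : V}
    (hp : IsSTPath E p) (hv : v ∈ p)
    (hR : ¬ ∃ w ∈ R, (∃ q, PathFrom E v w q) ∨ (∃ q, PathFrom E w v q)) :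
    p ∉ coveredPaths E R := by
  obtain ⟨s, t, hst, rfl⟩ := hD p hp
  rintro ⟨-, w, hw, hwp⟩
  exact hR ⟨w, hw, exists_pathFrom_of_mem_pair hst hv hwp⟩

end IsDirect

end DirectNetwork

theorem direct_network_tendril_bound_general [Fintype V] (E : V → V → Prop)
    (hdirect : ∀ p : List V, IsSTPath E p →
      ∃ s t, IsSource E s ∧ IsTarget E t ∧ E s t ∧ p = [s, t])
    (R : Set V) :
    {v : V | (∃ p : List V, IsSTPath E p ∧ v ∈ p) ∧
        ¬ ∃ w ∈ R, (∃ q, PathFrom E v w q) ∨ (∃ q, PathFrom E w v q)}.ncard ≤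
      2 * ((STPaths E).ncard - (coveredPaths E R).ncard) := by
  have hD : IsDirect E := fun p hp =>
    let ⟨s, t, _, _, hst, hp⟩ := hdirect p hp
    ⟨s, t, hst, hp⟩
  have hcov : coveredPaths E R ⊆ STPaths E := fun _ hp => hp.1
  calc _ ≤ (⋃ p ∈ STPaths E \ coveredPaths E R, {x | x ∈ p}).ncard := by
        refine Set.ncard_le_ncard ?_
        rintro v ⟨⟨p, hp, hvp⟩, hR⟩
        exact Set.mem_biUnion ⟨hp, hD.notMem_coveredPaths hp hvp hR⟩ hvp
    _ ≤ 2 * (STPaths E \ coveredPaths E R).ncard :=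
        hD.finite_stPaths.sdiff.ncard_biUnion_mem_le fun _ hp => (hD.length_eq_two hp.1).le
    _ = 2 * ((STPaths E).ncard - (coveredPaths E R).ncard) := by
        rw [Set.ncard_sdiff hcov (hD.finite_stPaths.subset hcov)]

/-- in a 'direct' network, in which every ST-path is a single
edge from a source to a target, the number of vertices of `V_ST` with
`φ_R(v) = 0` is at most twice the number of ST-paths not covered by `R`. -/
theorem direct_network_tendril_bound [Fintype V] (E : V → V → Prop) (hE : DAG E)
    (hdirect : ∀ p : List V, IsSTPath E p →
      ∃ s t, IsSource E s ∧ IsTarget E t ∧ E s t ∧ p = [s, t])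
    (R : Set V) :
    {v : V | (∃ p : List V, IsSTPath E p ∧ v ∈ p) ∧
        ¬ ∃ w ∈ R, (∃ q, PathFrom E v w q) ∨ (∃ q, PathFrom E w v q)}.ncard ≤
      2 * ((STPaths E).ncard - (coveredPaths E R).ncard) :=
  direct_network_tendril_bound_general E hdirect R
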